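/- For all natural numbers n ≥ 1 and k with 1 ≤ k ≤ n, the following identity of polynomials in w holds: Σ_m D(n,m,k) w^m = Σ_{j=k}^{n} (−1)^{j−k} C(n,j) C(j,k) (1+w)^{j(n−j)} A_{n−j}(w), where A_i(w) = Σ_m D(i,m) w^m. -/

import Mathlib

/-- A finite labelled digraph (edge set on `Fin n`) is acyclic if the transitive
closure of its edge relation is irreflexive. -/
def DAcyclic {n : ℕ} (E : Finset (Fin n × Fin n)) : Prop :=
  Irreflexive (Relation.TransGen fun a b => (a, b) ∈ E)

/-- Sources of a digraph: vertices with no incoming edge. -/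
def dagSources {n : ℕ} (E : Finset (Fin n × Fin n)) : Finset (Fin n) :=
  Finset.univ.filter fun v => ∀ u, (u, v) ∉ E

open Classical in
/-- `Dcount n m k` = number of labelled DAGs on `n` vertices with `m` edges and
exactly `k` sources. -/
noncomputable def Dcount (n m k : ℕ) : ℕ :=
  (Finset.univ.filter fun E : Finset (Fin n × Fin n) =>
    DAcyclic E ∧ E.card = m ∧ (dagSources E).card = k).card

open Classical in
/-- `DcountE n m` = number of labelled DAGs on `n` vertices with `m` edges. -/
noncomputable def DcountE (n m : ℕ) : ℕ :=
  (Finset.univ.filter fun E : Finset (Fin n × Fin n) =>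
    DAcyclic E ∧ E.card = m).card

/-!
Inclusion–exclusion over a set `T` of vertices required to be sources: since
`∑_{T ⊆ S} (-1)^(|T|-k) C(|T|,k) = [|S| = k]`, the weighted number of DAGs with exactly `k`
sources is an alternating sum, over `T`, of the weighted number of DAGs in which every vertex of
`T` is a source. No edge of such a DAG ends in `T`, so no cycle meets `T`: the DAG is an arbitrary
set of edges from `T` to its complement together with an arbitrary DAG on the complement, which
contributes `(1 + w)^(j(n-j)) A_{n-j}(w)` when `|T| = j`.
-/

open Finset Relation

theorem Finset.tsum_card_filter_mul_pow {ι R : Type*} [CommSemiring R] [TopologicalSpace R]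
    (s : Finset ι) (g : ι → ℕ) (w : R) :
    ∑' m : ℕ, (#{x ∈ s | g x = m} : R) * w ^ m = ∑ x ∈ s, w ^ g x := by
  rw [tsum_eq_sum (s := s.image g), sum_comp (fun m => w ^ m) g]
  · simp only [nsmul_eq_mul]
  · intro m hm
    rw [filter_false_of_mem fun x hx (hgx : g x = m) => hm (hgx ▸ mem_image_of_mem g hx)]
    simp

theorem Finset.sum_powerset_union_of_disjoint {α M : Type*} [DecidableEq α] [AddCommMonoid M]
    {X Y : Finset α} (hXY : Disjoint X Y) (f : Finset α → Finset α → M) :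
    ∑ s ∈ (X ∪ Y).powerset, f (s ∩ X) (s ∩ Y) =
      ∑ a ∈ X.powerset, ∑ b ∈ Y.powerset, f a b := by
  rw [← sum_product']
  refine sum_nbij' (fun s => (s ∩ X, s ∩ Y)) (fun p => p.1 ∪ p.2) ?_ ?_ ?_ ?_ (fun _ _ => rfl)
  · simp
  · simp only [mem_product, mem_powerset, and_imp, Prod.forall]
    exact fun a b ha hb => union_subset_union ha hb
  · intro s hs
    simp only [mem_powerset] at hs
    rw [← inter_union_distrib_left, inter_eq_left.2 hs]
  · simp only [mem_product, mem_powerset, and_imp, Prod.forall, Prod.mk.injEq]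
    intro a b ha hb
    rw [disjoint_left] at hXY
    constructor <;> ext x <;> simp only [mem_inter, mem_union] <;> grind

theorem Int.alternating_sum_range_choose_mul_choose (s k : ℕ) :
    ∑ j ∈ Finset.range (s + 1), (-1 : ℤ) ^ (j - k) * s.choose j * j.choose k =
      if s = k then 1 else 0 := by
  obtain hsk | hks := lt_or_ge s k
  · rw [if_neg hsk.ne]
    refine sum_eq_zero fun j hj => ?_
    rw [Nat.choose_eq_zero_of_lt (n := j) (by grind), Nat.cast_zero, mul_zero]
  obtain ⟨d, rfl⟩ := Nat.exists_eq_add_of_le hks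
  have hsplit : k + d + 1 = k + (d + 1) := by omega
  rw [hsplit, sum_range_add, sum_eq_zero fun j hj => by
    rw [Nat.choose_eq_zero_of_lt (mem_range.1 hj), Nat.cast_zero, mul_zero], zero_add]
  calc ∑ i ∈ Finset.range (d + 1),
        (-1 : ℤ) ^ (k + i - k) * (k + d).choose (k + i) * (k + i).choose k
      = (k + d).choose k * ∑ i ∈ Finset.range (d + 1), (-1 : ℤ) ^ i * d.choose i := by
        rw [mul_sum]
        refine sum_congr rfl fun i _ => ?_
        have h := Nat.choose_mul (n := k + d) (Nat.le_add_right k i)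
        simp only [Nat.add_sub_cancel_left] at h ⊢
        rw [mul_assoc, ← Nat.cast_mul, h]
        push_cast
        ring
    _ = if k + d = k then 1 else 0 := by
        rw [Int.alternating_sum_range_choose]
        rcases d with _ | d <;> simp

theorem Finset.sum_powerset_neg_one_pow_card_sub_mul_choose {α R : Type*} [CommRing R]
    (S : Finset α) (k : ℕ) :
    ∑ T ∈ S.powerset, (-1 : R) ^ (#T - k) * (#T).choose k = if #S = k then 1 else 0 := by
  have h := congrArg (Int.cast : ℤ → R) (Int.alternating_sum_range_choose_mul_choose #S k)
  push_cast at h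
  rw [sum_powerset_apply_card (fun j => (-1 : R) ^ (j - k) * j.choose k), ← h]
  refine sum_congr rfl fun j _ => ?_
  rw [nsmul_eq_mul]
  ring

theorem Finset.sum_filter_card_eq_alternating_sum {ι α R : Type*} [Fintype α] [DecidableEq α]
    [CommRing R] (s : Finset ι) (σ : ι → Finset α) (g : ι → R) (k : ℕ) :
    ∑ x ∈ s with #(σ x) = k, g x =
      ∑ T : Finset α,
        (-1 : R) ^ (#T - k) * (#T).choose k * ∑ x ∈ s with T ⊆ σ x, g x := by
  calc ∑ x ∈ s with #(σ x) = k, g x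
      = ∑ x ∈ s, ∑ T ∈ (σ x).powerset, (-1 : R) ^ (#T - k) * (#T).choose k * g x := by
        simp only [sum_filter, ← sum_mul, sum_powerset_neg_one_pow_card_sub_mul_choose, ite_mul,
          one_mul, zero_mul]
    _ = _ := by
        simp only [mul_sum]
        refine sum_comm' fun x T => ?_
        simp

section EdgeAcyclic

variable {V W : Type*}

/-- `DAcyclic` is the case `V = Fin n`, definitionally. -/
def EdgeAcyclic (E : Finset (V × V)) : Prop :=
  ∀ v, ¬TransGen (fun a b => (a, b) ∈ E) v v

theorem EdgeAcyclic.mono {E F : Finset (V × V)} (hF : EdgeAcyclic F) (hEF : E ⊆ F) :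
    EdgeAcyclic E :=
  fun v hv => hF v (TransGen.mono (fun _ _ hab => hEF hab) v v hv)

theorem edgeAcyclic_map_iff (f : W ↪ V) {B : Finset (W × W)} :
    EdgeAcyclic (B.map (f.prodMap f)) ↔ EdgeAcyclic B := by
  constructor
  · intro h x hx
    exact h (f x) (hx.lift f fun a b hab => mem_map_of_mem (f.prodMap f) hab)
  · intro h v hv
    obtain ⟨u, huv, -⟩ := TransGen.head'_iff.1 hv
    obtain ⟨⟨x, -⟩, -, -⟩ := mem_map.1 huv
    have : Nonempty W := ⟨x⟩
    -- the edges of `B.map (f.prodMap f)` join points of `range f`, on which `invFun f` inverts `f`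
    refine h _ (hv.lift (Function.invFun f) fun a b hab => ?_)
    obtain ⟨⟨x, y⟩, hxy, hab⟩ := mem_map.1 hab
    simp only [Function.Embedding.coe_prodMap, Prod.map, Prod.mk.injEq] at hab
    obtain ⟨rfl, rfl⟩ := hab
    simpa only [Function.onFun, Function.leftInverse_invFun f.injective _] using hxy

variable [Fintype V] [DecidableEq V]

theorem EdgeAcyclic.of_inter_product {E : Finset (V × V)} {S : Finset V}
    (hE : E ⊆ univ ×ˢ S) (h : EdgeAcyclic (E ∩ S ×ˢ S)) : EdgeAcyclic E := by
  have target_mem : ∀ {a b}, (a, b) ∈ E → b ∈ S := fun hab => (mem_product.1 (hE hab)).2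
  have restrict : ∀ {a b}, TransGen (fun a b => (a, b) ∈ E) a b → a ∈ S →
      TransGen (fun a b => (a, b) ∈ E ∩ S ×ˢ S) a b := by
    intro a b hab
    induction hab using TransGen.head_induction_on with
    | single hab =>
      exact fun ha => .single (mem_inter.2 ⟨hab, mk_mem_product ha (target_mem hab)⟩)
    | head hac _ ih =>
      exact fun ha => .head (mem_inter.2 ⟨hac, mk_mem_product ha (target_mem hac)⟩)
        (ih (target_mem hac))
  intro v hv
  obtain ⟨u, -, huv⟩ := TransGen.tail'_iff.1 hv
  exact h v (restrict hv (target_mem huv))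

theorem edgeAcyclic_iff_inter_product {E : Finset (V × V)} {S : Finset V}
    (hE : E ⊆ univ ×ˢ S) : EdgeAcyclic E ↔ EdgeAcyclic (E ∩ S ×ˢ S) :=
  ⟨fun h => h.mono inter_subset_left, .of_inter_product hE⟩

end EdgeAcyclic

section EdgeSums

variable {V W R : Type*} [CommSemiring R]

open Classical in
theorem sum_acyclic_subset_map_product [Fintype W] (f : W ↪ V) (w : R) :
    ∑ B ∈ (univ.map f ×ˢ univ.map f).powerset with EdgeAcyclic B, w ^ #B =
      ∑ B : Finset (W × W) with EdgeAcyclic B, w ^ #B := by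
  have hmap : {B ∈ (univ.map f ×ˢ univ.map f).powerset | EdgeAcyclic B} =
      ({B | EdgeAcyclic B} : Finset (Finset (W × W))).map
        (mapEmbedding (f.prodMap f)).toEmbedding := by
    ext B
    simp only [mem_filter, mem_powerset, mem_map, mem_univ, true_and, ← prodMap_map_product,
      univ_product_univ, subset_map_iff, subset_univ, RelEmbedding.coe_toEmbedding,
      mapEmbedding_apply]
    constructor
    · rintro ⟨⟨u, rfl⟩, h⟩
      exact ⟨u, (edgeAcyclic_map_iff f).1 h, rfl⟩
    · rintro ⟨u, h, rfl⟩
      exact ⟨⟨u, rfl⟩, (edgeAcyclic_map_iff f).2 h⟩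
  rw [hmap, sum_map]
  simp only [RelEmbedding.coe_toEmbedding, mapEmbedding_apply, card_map]

open Classical in
theorem sum_acyclic_subset_univ_product_compl [Fintype V] [DecidableEq V] (T : Finset V) (w : R) :
    ∑ E ∈ (univ ×ˢ Tᶜ).powerset with EdgeAcyclic E, w ^ #E =
      (1 + w) ^ (#T * #Tᶜ) * ∑ B ∈ (Tᶜ ×ˢ Tᶜ).powerset with EdgeAcyclic B, w ^ #B := by
  set X := T ×ˢ Tᶜ
  set Y := Tᶜ ×ˢ Tᶜ
  have hXY : Disjoint X Y := disjoint_product.2 (.inl disjoint_compl_right)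
  have hunion : univ ×ˢ Tᶜ = X ∪ Y := by rw [← union_product, union_compl]
  calc ∑ E ∈ (univ ×ˢ Tᶜ).powerset with EdgeAcyclic E, w ^ #E
      = ∑ E ∈ (X ∪ Y).powerset,
          if EdgeAcyclic (E ∩ Y) then w ^ #(E ∩ X) * w ^ #(E ∩ Y) else 0 := by
        rw [sum_filter, hunion]
        refine sum_congr rfl fun E hE => ?_
        have hEXY : E ⊆ X ∪ Y := mem_powerset.1 hE
        rw [edgeAcyclic_iff_inter_product (hunion ▸ hEXY), ← pow_add,
          ← card_union_of_disjoint (hXY.mono inter_subset_right inter_subset_right),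
          ← inter_union_distrib_left, inter_eq_left.2 hEXY]
    _ = (∑ A ∈ X.powerset, w ^ #A) * ∑ B ∈ Y.powerset with EdgeAcyclic B, w ^ #B := by
        rw [sum_powerset_union_of_disjoint hXY (fun A B =>
          if EdgeAcyclic B then w ^ #A * w ^ #B else 0), sum_mul_sum]
        simp only [sum_filter]
    _ = _ := by
        have h := sum_pow_mul_eq_add_pow w 1 X
        simp only [one_pow, mul_one, add_comm w] at h
        rw [h, card_product]

end EdgeSums

theorem subset_dagSources_iff {n : ℕ} {T : Finset (Fin n)} {E : Finset (Fin n × Fin n)} :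
    T ⊆ dagSources E ↔ E ⊆ univ ×ˢ Tᶜ := by
  simp only [subset_iff, dagSources, mem_filter, mem_univ, true_and, mem_product, mem_compl,
    Prod.forall]
  exact ⟨fun h u v huv hv => h hv u huv, fun h v hv u huv => h u v huv hv⟩

open Classical in
theorem tsum_Dcount_mul_pow (n k : ℕ) (w : ℝ) :
    ∑' m : ℕ, (Dcount n m k : ℝ) * w ^ m =
      ∑ E : Finset (Fin n × Fin n) with DAcyclic E ∧ #(dagSources E) = k, w ^ #E := by
  rw [← tsum_card_filter_mul_pow]
  refine tsum_congr fun m => ?_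
  rw [Dcount, filter_filter]
  congr 3
  exact filter_congr fun E _ => by rw [and_assoc, and_comm (a := #(dagSources E) = k)]

open Classical in
theorem tsum_DcountE_mul_pow (n : ℕ) (w : ℝ) :
    ∑' m : ℕ, (DcountE n m : ℝ) * w ^ m =
      ∑ E : Finset (Fin n × Fin n) with DAcyclic E, w ^ #E := by
  rw [← tsum_card_filter_mul_pow]
  simp only [DcountE, filter_filter]

open Classical in
theorem sum_dAcyclic_subset_dagSources (n : ℕ) (T : Finset (Fin n)) (w : ℝ) :
    ∑ E : Finset (Fin n × Fin n) with DAcyclic E ∧ T ⊆ dagSources E, w ^ #E =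
      (1 + w) ^ (#T * (n - #T)) * ∑' m : ℕ, (DcountE (n - #T) m : ℝ) * w ^ m := by
  have hcard : #Tᶜ = n - #T := by rw [card_compl, Fintype.card_fin]
  calc ∑ E : Finset (Fin n × Fin n) with DAcyclic E ∧ T ⊆ dagSources E, w ^ #E
      = ∑ E ∈ (univ ×ˢ Tᶜ).powerset with EdgeAcyclic E, w ^ #E := by
        refine sum_congr ?_ fun _ _ => rfl
        ext E
        simp only [mem_filter, mem_univ, true_and, mem_powerset, subset_dagSources_iff, and_comm]
        rfl
    _ = _ := by
        rw [sum_acyclic_subset_univ_product_compl, ← map_orderEmbOfFin_univ Tᶜ hcard,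
          sum_acyclic_subset_map_product, map_orderEmbOfFin_univ Tᶜ hcard, hcard,
          tsum_DcountE_mul_pow]
        rfl

theorem dag_sources_by_inclusion_exclusion_general (n k : ℕ) (w : ℝ) :
    ∑' m : ℕ, (Dcount n m k : ℝ) * w ^ m
      = ∑ j ∈ Finset.Icc k n,
          (-1 : ℝ) ^ (j - k) * (n.choose j) * (j.choose k) * (1 + w) ^ (j * (n - j))
            * ∑' m : ℕ, (DcountE (n - j) m : ℝ) * w ^ m := by
  rw [tsum_Dcount_mul_pow, ← filter_filter, sum_filter_card_eq_alternating_sum]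
  simp only [filter_filter, sum_dAcyclic_subset_dagSources]
  rw [← powerset_univ, sum_powerset_apply_card (fun j => (-1 : ℝ) ^ (j - k) * j.choose k *
      ((1 + w) ^ (j * (n - j)) * ∑' m : ℕ, (DcountE (n - j) m : ℝ) * w ^ m)),
    card_univ, Fintype.card_fin, Nat.range_succ_eq_Icc_zero]
  rw [← sum_subset (Icc_subset_Icc_left k.zero_le) fun j _ hj => ?_]
  · refine sum_congr rfl fun j _ => ?_
    rw [nsmul_eq_mul]
    ring
  · rw [Nat.choose_eq_zero_of_lt (n := j) (by grind), Nat.cast_zero]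
    simp

/-- For $1 \le k \le n$:
$\sum_m D(n,m,k) w^m = \sum_{j=k}^n (-1)^{j-k}\binom nj \binom jk (1+w)^{j(n-j)} A_{n-j}(w)$. -/
theorem dag_sources_by_inclusion_exclusion (n k : ℕ) (hn : 1 ≤ n) (hk : 1 ≤ k)
    (hkn : k ≤ n) (w : ℝ) :
    ∑' m : ℕ, (Dcount n m k : ℝ) * w ^ m
      = ∑ j ∈ Finset.Icc k n,
          (-1 : ℝ) ^ (j - k) * (n.choose j) * (j.choose k) * (1 + w) ^ (j * (n - j))
            * ∑' m : ℕ, (DcountE (n - j) m : ℝ) * w ^ m :=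
  dag_sources_by_inclusion_exclusion_general n k w
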